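/- arXiv:nucl-th/9505028 — 3 statements merged into one kernel-verified Lean document; each statement's English description precedes it below -/
import Mathlib

section
/- Let λ < 0 be real, let c be real with 0 < |c| < 1 and set s² = 1 − c². Then for every real ρ ≥ 0, every real η ∈ [−1, 1], and every z ∈ ℂ satisfying Re z > λ/c² + (c²/(4s²|λ|))·(Im z)², one has (z − λ) + ρ + 2c·η·√(z − λ)·√ρ − s²·z ≠ 0. -/
/-!
Write `q = √(z - λ)`, `r = √ρ` and `L = s²|λ| > 0`. Since `q² = z - λ`, the equation becomes
`(cq)² + 2ηr·(cq) + r² + L = 0`, i.e. `(cq + ηr)² = -((1 - η²)r² + L)`; so either `cq` is real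
(impossible, as then the left side is `≥ 0 > -L`) or `Re (cq) = -ηr` and `(Im (cq))² ≥ L`.
On the other hand `q ↦ q² + λ` maps the strip `(c · Im q)² < L` onto the parabolic domain:
with `q = x + iy` the defining inequality is `((cy)² - L)((cx)² + L) < 0`.
-/

noncomputable def csqrt (w : ℂ) : ℂ := w ^ ((1 : ℂ) / 2)

lemma csqrt_sq (w : ℂ) : csqrt w ^ 2 = w := by
  simp [csqrt, one_div]

lemma csqrt_ofReal {x : ℝ} (hx : 0 ≤ x) : csqrt x = (√x : ℝ) := by
  rw [csqrt, Real.sqrt_eq_rpow, Complex.ofReal_cpow hx]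
  norm_num

lemma le_im_sq_of_sq_add_mul_add_eq_zero {η r L : ℝ} (hη : η ^ 2 ≤ 1) {p : ℂ}
    (hp : p ^ 2 + 2 * η * r * p + r ^ 2 + L = 0) : L ≤ p.im ^ 2 := by
  have hre := congrArg Complex.re hp
  have him := congrArg Complex.im hp
  simp only [pow_two, Complex.add_re, Complex.mul_re, Complex.add_im, Complex.mul_im,
    Complex.ofReal_re, Complex.ofReal_im, Complex.re_ofNat, Complex.im_ofNat,
    Complex.zero_re, Complex.zero_im] at hre him
  have hsplit : p.im * (p.re + η * r) = 0 := by linear_combination him / 2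
  have hdefect := mul_nonneg (sub_nonneg.mpr hη) (sq_nonneg r)
  rcases mul_eq_zero.mp hsplit with hreal | hcentred
  · nlinarith [sq_nonneg (p.re + η * r)]
  · nlinarith

lemma mul_im_sq_lt_of_lt_re_sq {c L : ℝ} (hc : c ≠ 0) (hL : 0 < L) {q : ℂ}
    (hq : c ^ 2 / (4 * L) * (q ^ 2).im ^ 2 - L / c ^ 2 < (q ^ 2).re) :
    (c * q.im) ^ 2 < L := by
  have hre : (q ^ 2).re = q.re ^ 2 - q.im ^ 2 := by simp [pow_two]
  have him : (q ^ 2).im = 2 * q.re * q.im := by simp [pow_two]; ring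
  rw [hre, him] at hq
  have hscale : 4 * L * c ^ 2 * (c ^ 2 / (4 * L) * (2 * q.re * q.im) ^ 2 - L / c ^ 2)
      = 4 * ((c * q.re) ^ 2 * (c * q.im) ^ 2 - L ^ 2) := by
    field_simp
    ring
  have key : ((c * q.im) ^ 2 - L) * ((c * q.re) ^ 2 + L) < 0 := by
    nlinarith [mul_lt_mul_of_pos_left hq (by positivity : 0 < 4 * L * c ^ 2)]
  by_contra! hle
  exact key.not_ge (mul_nonneg (sub_nonneg.mpr hle) (by positivity))

/-- For λ < 0, 0 < |c| < 1, s² = 1 − c², every ρ ≥ 0,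
η ∈ [−1,1] and z with Re z > λ/c² + (c²/(4s²|λ|))·(Im z)², one has
(z − λ) + ρ + 2cη√(z−λ)√ρ − s²z ≠ 0. -/
theorem no_roots_in_parabolic_domain
    (lam c ρ η : ℝ) (z : ℂ)
    (hlam : lam < 0) (hc0 : 0 < |c|) (hc1 : |c| < 1)
    (hρ : 0 ≤ ρ) (hη : η ∈ Set.Icc (-1 : ℝ) 1)
    (hz : z.re > lam / c ^ 2 + (c ^ 2 / (4 * (1 - c ^ 2) * |lam|)) * z.im ^ 2) :
    (z - (lam : ℂ)) + (ρ : ℂ)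
      + 2 * (c : ℂ) * (η : ℂ) * csqrt (z - (lam : ℂ)) * csqrt ((ρ : ℝ) : ℂ)
      - (1 - (c : ℂ) ^ 2) * z ≠ 0 := by
  intro h
  have hc : c ≠ 0 := abs_pos.mp hc0
  set L := (1 - c ^ 2) * |lam| with hL_def
  have hL : 0 < L := mul_pos (by nlinarith [sq_abs c, abs_nonneg c]) (abs_pos.mpr hlam.ne)
  set q := csqrt (z - lam)
  have hq : q ^ 2 = z - lam := csqrt_sq _
  rw [csqrt_ofReal hρ] at h
  have hroot : (c * q) ^ 2 + 2 * η * √ρ * (c * q) + (√ρ : ℝ) ^ 2 + L = 0 := by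
    rw [hL_def, abs_of_neg hlam, ← Complex.ofReal_pow, Real.sq_sqrt hρ]
    push_cast
    linear_combination h + (c : ℂ) ^ 2 * hq
  have hη2 : η ^ 2 ≤ 1 := (sq_le_one_iff_abs_le_one η).mpr (abs_le.mpr hη)
  have hlower : L ≤ (c * q.im) ^ 2 := by
    simpa using le_im_sq_of_sq_add_mul_add_eq_zero hη2 hroot
  have hupper : (c * q.im) ^ 2 < L := by
    refine mul_im_sq_lt_of_lt_re_sq hc hL ?_
    have hshift : lam / c ^ 2 = lam - L / c ^ 2 := by
      rw [hL_def, abs_of_neg hlam]; field_simp; ring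
    rw [hq, Complex.sub_re, Complex.sub_im, Complex.ofReal_re, Complex.ofReal_im, sub_zero]
    rw [hshift, mul_assoc 4, ← hL_def] at hz
    linarith
  exact hupper.not_ge hlower
end

section
/- Assume |λ₂| > c²·|λ₁|. Then for every η ∈ [−1, 1] the equation (★) has exactly one solution z ∈ ℂ; this solution is real, and it equals z₊(η) when η ≥ 0 and equals z₋(η) when η ≤ 0. -/
/-- Equation (★): (z − λ₁) + (z − λ₂) + 2cη√(z−λ₁)√(z−λ₂) − s²z = 0,
with s² = 1 − c². -/
def eqStar (l1 l2 c η : ℝ) (z : ℂ) : Prop :=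
  (z - (l1 : ℂ)) + (z - (l2 : ℂ))
    + 2 * (c : ℂ) * (η : ℂ) * csqrt (z - (l1 : ℂ)) * csqrt (z - (l2 : ℂ))
    - (1 - (c : ℂ) ^ 2) * z = 0

/-- z₊(η) from Lemma 2. -/
noncomputable def zPlus (l1 l2 c η : ℝ) : ℂ :=
  ((((1 + c ^ 2 - 2 * c ^ 2 * η ^ 2) * (l1 + l2) : ℝ) : ℂ)
      + 2 * csqrt (((c ^ 2 * η ^ 2 *
          (l1 * l2 * (1 - c ^ 2) ^ 2 - (l2 - l1) ^ 2 * c ^ 2 * (1 - η ^ 2)) : ℝ) : ℂ)))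
    / ((((1 + c ^ 2) ^ 2 - 4 * c ^ 2 * η ^ 2 : ℝ) : ℂ))

/-- z₋(η) from Lemma 2. -/
noncomputable def zMinus (l1 l2 c η : ℝ) : ℂ :=
  ((((1 + c ^ 2 - 2 * c ^ 2 * η ^ 2) * (l1 + l2) : ℝ) : ℂ)
      - 2 * csqrt (((c ^ 2 * η ^ 2 *
          (l1 * l2 * (1 - c ^ 2) ^ 2 - (l2 - l1) ^ 2 * c ^ 2 * (1 - η ^ 2)) : ℝ) : ℂ)))
    / ((((1 + c ^ 2) ^ 2 - 4 * c ^ 2 * η ^ 2 : ℝ) : ℂ))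

lemma csqrt_zero : csqrt 0 = 0 := by
  simp [csqrt, Complex.zero_cpow (by norm_num : (1:ℂ)/2 ≠ 0)]

lemma csqrt_ofReal_nonneg {x : ℝ} (hx : 0 ≤ x) : csqrt (x:ℂ) = (Real.sqrt x : ℂ) := by
  rw [csqrt, Real.sqrt_eq_rpow, Complex.ofReal_cpow hx]
  norm_num

lemma csqrt_ofReal_neg {x : ℝ} (hx : x < 0) :
    csqrt (x:ℂ) = (Real.sqrt (-x) : ℂ) * Complex.I := by
  rw [csqrt, Complex.cpow_def_of_ne_zero (by exact_mod_cast hx.ne : (x:ℂ) ≠ 0)]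
  rw [Complex.log, Complex.arg_ofReal_of_neg hx]
  have habs : ‖(x:ℂ)‖ = -x := by
    rw [Complex.norm_real, Real.norm_eq_abs, abs_of_neg hx]
  rw [habs]
  have h1 : ((Real.log (-x) : ℂ) + (Real.pi:ℂ) * Complex.I) * ((1:ℂ)/2)
      = ((Real.log (-x) / 2 : ℝ) : ℂ) + ((Real.pi/2 : ℝ):ℂ) * Complex.I := by
    push_cast; ring
  rw [h1, Complex.exp_add, ← Complex.ofReal_exp]
  rw [Complex.exp_mul_I]
  have : Real.exp (Real.log (-x) / 2) = Real.sqrt (-x) := by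
    rw [Real.sqrt_eq_rpow, Real.rpow_def_of_pos (by linarith)]; ring_nf
  rw [this]
  have hc : Complex.cos ((Real.pi/2 : ℝ):ℂ) = 0 := by
    rw [← Complex.ofReal_cos]; simp [Real.cos_pi_div_two]
  have hs : Complex.sin ((Real.pi/2 : ℝ):ℂ) = 1 := by
    rw [← Complex.ofReal_sin]; simp [Real.sin_pi_div_two]
  rw [hc, hs]; ring

lemma csqrt_prod_neg {l1 l2 x : ℝ} (h1 : x < l1) (h12 : l1 ≤ l2) :
    csqrt ((x:ℂ) - l1) * csqrt ((x:ℂ) - l2)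
      = -((Real.sqrt ((l1 - x) * (l2 - x)) : ℝ) : ℂ) := by
  have e1 : (x:ℂ) - l1 = ((x - l1 : ℝ) : ℂ) := by push_cast; ring
  have e2 : (x:ℂ) - l2 = ((x - l2 : ℝ) : ℂ) := by push_cast; ring
  rw [e1, e2, csqrt_ofReal_neg (by linarith), csqrt_ofReal_neg (by linarith)]
  have h3 : Real.sqrt ((l1 - x) * (l2 - x)) = Real.sqrt (l1 - x) * Real.sqrt (l2 - x) :=
    Real.sqrt_mul (by linarith) _
  have h4 : -(x - l1) = l1 - x := by ring
  have h5 : -(x - l2) = l2 - x := by ring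
  rw [h3, h4, h5]
  push_cast
  ring_nf
  rw [Complex.I_sq]
  ring

lemma eqStar_iff (l1 l2 c η : ℝ) (w : ℂ) : eqStar l1 l2 c η w ↔
    2*(c:ℂ)*(η:ℂ)*(csqrt (w - (l1:ℂ)) * csqrt (w - (l2:ℂ)))
      = ((l1:ℂ) + (l2:ℂ)) - (1+(c:ℂ)^2)*w := by
  unfold eqStar
  constructor <;> intro h <;> linear_combination h

lemma quad_root (d m q r t : ℝ) (hd : d ≠ 0) (ht : t^2 = m^2 - d*q)
    (hr : r = (m+t)/d) : d*r^2 - 2*m*r + q = 0 := by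
  subst hr; field_simp; linear_combination ht

set_option maxHeartbeats 2000000

/-- if |λ₂| > c²|λ₁| then for every η ∈ [−1,1] equation (★)
has exactly one solution z ∈ ℂ; it is real, equals z₊(η) when η ≥ 0 and
z₋(η) when η ≤ 0. -/
theorem unique_real_root_of_abs_gt
    (l1 l2 c : ℝ) (h12 : l1 ≤ l2) (h2 : l2 < 0) (hc : 0 < c) (hc1 : c < 1)
    (habs : |l2| > c ^ 2 * |l1|) (η : ℝ) (hη : η ∈ Set.Icc (-1 : ℝ) 1) :
    ∃ z : ℂ, eqStar l1 l2 c η z ∧ (∀ w : ℂ, eqStar l1 l2 c η w → w = z) ∧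
      z.im = 0 ∧ (0 ≤ η → z = zPlus l1 l2 c η) ∧ (η ≤ 0 → z = zMinus l1 l2 c η) := by
  obtain ⟨hη1, hη2⟩ := hη
  have hl1 : l1 < 0 := lt_of_le_of_lt h12 h2
  have hl2c : l2 < c^2 * l1 := by
    rw [abs_of_neg h2, abs_of_neg hl1] at habs; nlinarith [habs]
  have h1c : (0:ℝ) < 1 + c^2 := by positivity
  have h1cC : ((1:ℂ) + (c:ℂ)^2) ≠ 0 := by
    have : ((1 + c^2 : ℝ):ℂ) ≠ 0 := Complex.ofReal_ne_zero.mpr h1c.ne'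
    push_cast at this; exact this
  by_cases hη0 : η = 0
  · -- case η = 0
    subst hη0
    refine ⟨(((l1+l2)/(1+c^2) : ℝ) : ℂ), ?_, ?_, ?_, ?_, ?_⟩
    · rw [eqStar_iff]
      push_cast
      field_simp
      simp
    · intro w hw
      rw [eqStar_iff] at hw
      push_cast at hw ⊢
      field_simp at hw ⊢
      linear_combination hw
    · exact Complex.ofReal_im _
    · intro _
      rw [zPlus]
      have h0 : ((c ^ 2 * (0:ℝ) ^ 2 *
          (l1 * l2 * (1 - c ^ 2) ^ 2 - (l2 - l1) ^ 2 * c ^ 2 * (1 - (0:ℝ) ^ 2)) : ℝ) : ℂ)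
          = 0 := by norm_num
      rw [h0, csqrt_zero]
      push_cast
      field_simp
      ring
    · intro _
      rw [zMinus]
      have h0 : ((c ^ 2 * (0:ℝ) ^ 2 *
          (l1 * l2 * (1 - c ^ 2) ^ 2 - (l2 - l1) ^ 2 * c ^ 2 * (1 - (0:ℝ) ^ 2)) : ℝ) : ℂ)
          = 0 := by norm_num
      rw [h0, csqrt_zero]
      push_cast
      field_simp
      ring
  · -- main case η ≠ 0
    have hl1 : l1 < 0 := lt_of_le_of_lt h12 h2
    have h1c : (0:ℝ) < 1 + c^2 := by positivity
    have hη2pos : 0 < η^2 := by positivity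
    have hηsq : η^2 ≤ 1 := by nlinarith
    have key : (l2 - l1)^2 * c^2 < l1 * l2 * (1 - c^2)^2 := by
      nlinarith [mul_pos (show (0:ℝ) < c^2*l1 - l2 by linarith)
          (show (0:ℝ) < (-l1) * (1 - c^4) - c^2*(c^2*l1 - l2) by nlinarith),
        sq_nonneg c, sq_nonneg (l2 - l1)]
    have hl1c2l2 : l1 < c^2 * l2 := by nlinarith
    have hs2 : (0:ℝ) < 1 - c^2 := by nlinarith
    have hD : 0 < (1 + c^2)^2 - 4*c^2*η^2 := by
      nlinarith [mul_pos hs2 hs2, mul_nonneg (mul_nonneg (sq_nonneg c) (sq_nonneg c)) (sq_nonneg η), sq_nonneg (c*η)]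
    set d := (1 + c^2)^2 - 4*c^2*η^2 with hd_def
    set M := (1 + c^2 - 2*c^2*η^2) * (l1 + l2) with hM_def
    set Δ := c^2*η^2*(l1*l2*(1 - c^2)^2 - (l2 - l1)^2*c^2*(1 - η^2)) with hΔ_def
    have hΔpos : 0 < Δ := by
      rw [hΔ_def]
      have h9 : (l2 - l1)^2*c^2*(1 - η^2) ≤ (l2 - l1)^2*c^2 := by
        nlinarith [mul_nonneg (mul_nonneg (sq_nonneg (l2-l1)) (sq_nonneg c)) (sq_nonneg η)]
      have hbig : 0 < l1*l2*(1 - c^2)^2 - (l2 - l1)^2*c^2*(1 - η^2) := by nlinarith [key]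
      positivity
    clear_value d M Δ
    set y := Real.sqrt Δ with hy_def
    have hy2 : y^2 = Δ := Real.sq_sqrt hΔpos.le
    have hy0 : 0 < y := Real.sqrt_pos.mpr hΔpos
    clear_value y
    set zp := (M + 2*y)/d with hzp_def
    set zm := (M - 2*y)/d with hzm_def
    clear_value zp zm
    have hdzp : d * zp = M + 2*y := by rw [hzp_def]; field_simp [hD.ne']
    have hdzm : d * zm = M - 2*y := by rw [hzm_def]; field_simp [hD.ne']
    -- quadratic facts
    have hid0 : M^2 - d*((l1+l2)^2 - 4*c^2*η^2*(l1*l2)) = 4*Δ := by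
      rw [hM_def, hd_def, hΔ_def]; ring
    have hdisc : (2*y)^2 = M^2 - d*((l1+l2)^2 - 4*c^2*η^2*(l1*l2)) := by
      linear_combination 4*hy2 - hid0
    have hdiscm : (-(2*y))^2 = M^2 - d*((l1+l2)^2 - 4*c^2*η^2*(l1*l2)) := by
      linear_combination hdisc
    have hQzp0 := quad_root d M ((l1+l2)^2 - 4*c^2*η^2*(l1*l2)) zp (2*y) hD.ne' hdisc hzp_def
    have hQzm0 := quad_root d M ((l1+l2)^2 - 4*c^2*η^2*(l1*l2)) zm (-(2*y)) hD.ne' hdiscm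
      (by rw [hzm_def]; ring_nf)
    have hqid : ∀ x : ℝ, ((1+c^2)*x - (l1+l2))^2 - 4*c^2*η^2*(x - l1)*(x - l2)
        = d*x^2 - 2*M*x + ((l1+l2)^2 - 4*c^2*η^2*(l1*l2)) := by
      intro x; rw [hd_def, hM_def]; ring
    have hQzp : ((1+c^2)*zp - (l1+l2))^2 = 4*c^2*η^2*(zp - l1)*(zp - l2) := by
      linear_combination hqid zp + hQzp0
    have hQzm : ((1+c^2)*zm - (l1+l2))^2 = 4*c^2*η^2*(zm - l1)*(zm - l2) := by
      linear_combination hqid zm + hQzm0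
    -- sign facts
    have hid1 : (1+c^2)*M - d*(l1+l2) = 2*c^2*η^2*(1-c^2)*(l1+l2) := by
      rw [hM_def, hd_def]; ring
    have hidA : (1+c^2)^2*Δ - (c^2*η^2*(1-c^2)*(l1+l2))^2
        = d*(c^2*η^2)*((l2 - c^2*l1)*(l1 - c^2*l2)) := by
      rw [hΔ_def, hd_def]; ring
    have hid2 : ((1+c^2)*y)^2 - (c^2*η^2*(1-c^2)*(l1+l2))^2
        = d*(c^2*η^2)*((l2 - c^2*l1)*(l1 - c^2*l2)) := by
      linear_combination (1+c^2)^2*hy2 + hidA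
    have hprodpos : 0 < d*(c^2*η^2)*((l2 - c^2*l1)*(l1 - c^2*l2)) := by
      apply mul_pos (mul_pos hD (by positivity))
      exact mul_pos_of_neg_of_neg (by linarith) (by linarith)
    have hBpos : 0 < c^2*η^2*(1-c^2)*(-(l1+l2)) := by
      apply mul_pos (by positivity); linarith
    have h3 : c^2*η^2*(1-c^2)*(-(l1+l2)) < (1+c^2)*y := by
      have hA : 0 < (1+c^2)*y := mul_pos h1c hy0
      have hsqeq : (c^2*η^2*(1-c^2)*(-(l1+l2)))^2 = (c^2*η^2*(1-c^2)*(l1+l2))^2 := by ring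
      have hAB : (c^2*η^2*(1-c^2)*(-(l1+l2)))^2 < ((1+c^2)*y)^2 := by
        rw [hsqeq]; linarith [hid2, hprodpos]
      exact lt_of_pow_lt_pow_left₀ 2 hA.le hAB
    have e1 : d*((1+c^2)*zp - (l1+l2)) = 2*c^2*η^2*(1-c^2)*(l1+l2) + 2*(1+c^2)*y := by
      linear_combination (1+c^2)*hdzp + hid1
    have hXp : 0 < (1+c^2)*zp - (l1+l2) := by
      have hpos : 0 < d*((1+c^2)*zp - (l1+l2)) := by rw [e1]; linarith
      rcases mul_pos_iff.mp hpos with ⟨_, hx⟩ | ⟨hd', _⟩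
      · exact hx
      · linarith
    have e1m : d*((l1+l2) - (1+c^2)*zm) = -(2*c^2*η^2*(1-c^2)*(l1+l2)) + 2*(1+c^2)*y := by
      linear_combination -((1+c^2)*hdzm) - hid1
    have hXm : 0 < (l1+l2) - (1+c^2)*zm := by
      have hpos : 0 < d*((l1+l2) - (1+c^2)*zm) := by
        rw [e1m]
        have h10 : 0 < -(2*c^2*η^2*(1-c^2)*(l1+l2)) := by linarith [hBpos]
        linarith [mul_pos h1c hy0, h10]
      rcases mul_pos_iff.mp hpos with ⟨_, hx⟩ | ⟨hd', _⟩
      · exact hx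
      · linarith
    -- zp < l1 and zm < l1
    have h8 : 0 < c^2*l1 - l2 := by linarith
    have hid3 : (d*l1 - M)^2 - 4*Δ = d*(c^2*l1 - l2)^2 := by
      rw [hM_def, hd_def, hΔ_def]; ring
    have hid4 : (1+c^2)*(d*l1 - M) = d*(c^2*l1 - l2) - 2*c^2*η^2*(1-c^2)*(l1+l2) := by
      rw [hM_def, hd_def]; ring
    have h5 : 0 < d*l1 - M := by
      have h4 : 0 < (1+c^2)*(d*l1 - M) := by
        rw [hid4]; linarith [mul_pos hD h8, hBpos]
      rcases mul_pos_iff.mp h4 with ⟨_, hx⟩ | ⟨hd', _⟩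
      · exact hx
      · linarith
    have h7 : (2*y)^2 < (d*l1 - M)^2 := by
      linarith [hid3, hy2, mul_pos hD (mul_pos h8 h8)]
    have h6 : 2*y < d*l1 - M := lt_of_pow_lt_pow_left₀ 2 h5.le h7
    have hzpl1 : zp < l1 := by
      have : d*zp < d*l1 := by linarith [hdzp]
      exact lt_of_mul_lt_mul_left this hD.le
    have hzml1 : zm < l1 := by
      have : d*zm < d*l1 := by linarith [hdzm, hy0]
      exact lt_of_mul_lt_mul_left this hD.le
    -- square roots at zp, zm
    set pp := Real.sqrt ((l1 - zp)*(l2 - zp)) with hpp_def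
    set pm := Real.sqrt ((l1 - zm)*(l2 - zm)) with hpm_def
    have hppprod : 0 < (l1 - zp)*(l2 - zp) := mul_pos (by linarith) (by linarith)
    have hpmprod : 0 < (l1 - zm)*(l2 - zm) := mul_pos (by linarith) (by linarith)
    have hpp2 : pp^2 = (l1 - zp)*(l2 - zp) := Real.sq_sqrt hppprod.le
    have hpm2 : pm^2 = (l1 - zm)*(l2 - zm) := Real.sq_sqrt hpmprod.le
    have hpp0 : 0 < pp := Real.sqrt_pos.mpr hppprod
    have hpm0 : 0 < pm := Real.sqrt_pos.mpr hpmprod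
    clear_value pp pm
    -- complex casts
    have hdC : ((d:ℝ):ℂ) ≠ 0 := Complex.ofReal_ne_zero.mpr hD.ne'
    have hyrC : ((y:ℝ):ℂ)^2 = (c:ℂ)^2*(η:ℂ)^2*((l1:ℂ)*(l2:ℂ)*(1-(c:ℂ)^2)^2
        - ((l2:ℂ)-(l1:ℂ))^2*(c:ℂ)^2*(1-(η:ℂ)^2)) := by
      have hyr : y^2 = c^2*η^2*(l1*l2*(1-c^2)^2 - (l2-l1)^2*c^2*(1-η^2)) := by
        rw [hy2, hΔ_def]
      exact_mod_cast congrArg (fun t : ℝ => (t:ℂ)) hyr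
    have hdCC : ((d:ℝ):ℂ) = (1+(c:ℂ)^2)^2 - 4*(c:ℂ)^2*(η:ℂ)^2 := by
      rw [hd_def]; push_cast; ring
    have hMCC : ((M:ℝ):ℂ) = (1+(c:ℂ)^2 - 2*(c:ℂ)^2*(η:ℂ)^2)*((l1:ℂ)+(l2:ℂ)) := by
      rw [hM_def]; push_cast; ring
    have hfac : ∀ w : ℂ, ((d:ℝ):ℂ) * ((((l1:ℂ)+(l2:ℂ)) - (1+(c:ℂ)^2)*w)^2
          - 4*(c:ℂ)^2*(η:ℂ)^2*((w - (l1:ℂ))*(w - (l2:ℂ))))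
        = (((d:ℝ):ℂ)*w - ((M:ℝ):ℂ) - 2*((y:ℝ):ℂ)) * (((d:ℝ):ℂ)*w - ((M:ℝ):ℂ) + 2*((y:ℝ):ℂ)) := by
      intro w
      rw [hdCC, hMCC]
      linear_combination (4:ℂ)*hyrC
    rcases lt_or_gt_of_ne hη0 with hneg | hpos
    · -- η < 0 : solution is zm
      refine ⟨((zm:ℝ):ℂ), ?_, ?_, by simp, ?_, ?_⟩
      · rw [eqStar_iff, csqrt_prod_neg hzml1 h12, ← hpm_def]
        have hsq : (2*c*η*pm)^2 = ((1+c^2)*zm - (l1+l2))^2 := by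
          linear_combination 4*c^2*η^2*hpm2 - hQzm
        have hApos : 0 < 2*c*(-η)*pm := mul_pos (mul_pos (by linarith) (by linarith)) hpm0
        have hreal : -(2*c*η*pm) = (l1+l2) - (1+c^2)*zm := by
          have hf : (-(2*c*η*pm) - ((l1+l2) - (1+c^2)*zm))
              * (-(2*c*η*pm) + ((l1+l2) - (1+c^2)*zm)) = 0 := by linear_combination hsq
          rcases mul_eq_zero.mp hf with h' | h'
          · linarith [h']
          · linarith [h', hXm, hApos]
        have hC := congrArg (fun t : ℝ => (t:ℂ)) hreal
        push_cast at hC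
        linear_combination hC
      · intro w hw
        rw [eqStar_iff] at hw
        have ha := csqrt_sq (w - (l1:ℂ))
        have hb := csqrt_sq (w - (l2:ℂ))
        have hsqw : (((l1:ℂ)+(l2:ℂ)) - (1+(c:ℂ)^2)*w)^2
            = 4*(c:ℂ)^2*(η:ℂ)^2*((w-(l1:ℂ))*(w-(l2:ℂ))) := by
          linear_combination (-(2*(c:ℂ)*(η:ℂ)*(csqrt (w-(l1:ℂ))*csqrt (w-(l2:ℂ)))
              + (((l1:ℂ)+(l2:ℂ)) - (1+(c:ℂ)^2)*w)))*hw
            + 4*(c:ℂ)^2*(η:ℂ)^2*(csqrt (w-(l2:ℂ)))^2*ha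
            + 4*(c:ℂ)^2*(η:ℂ)^2*(w-(l1:ℂ))*hb
        have hz : (((d:ℝ):ℂ)*w - ((M:ℝ):ℂ) - 2*((y:ℝ):ℂ))
            * (((d:ℝ):ℂ)*w - ((M:ℝ):ℂ) + 2*((y:ℝ):ℂ)) = 0 := by
          rw [← hfac w]; linear_combination ((d:ℝ):ℂ)*hsqw
        have hzmC : ((d:ℝ):ℂ)*((zm:ℝ):ℂ) = ((M:ℝ):ℂ) - 2*((y:ℝ):ℂ) := by
          exact_mod_cast congrArg (fun t : ℝ => (t:ℂ)) hdzm
        have hzpC : ((d:ℝ):ℂ)*((zp:ℝ):ℂ) = ((M:ℝ):ℂ) + 2*((y:ℝ):ℂ) := by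
          exact_mod_cast congrArg (fun t : ℝ => (t:ℂ)) hdzp
        rcases mul_eq_zero.mp hz with h' | h'
        · -- w = zp : contradiction
          exfalso
          have hwzp : w = ((zp:ℝ):ℂ) := by
            apply mul_left_cancel₀ hdC; rw [hzpC]; linear_combination h'
          rw [hwzp, csqrt_prod_neg hzpl1 h12, ← hpp_def] at hw
          have hr : -(2*c*η*pp) = (l1+l2) - (1+c^2)*zp := by
            have h2c : ((-(2*c*η*pp) : ℝ) : ℂ) = (((l1+l2) - (1+c^2)*zp : ℝ) : ℂ) := by
              push_cast; linear_combination hw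
            exact_mod_cast h2c
          have hApos : 0 < 2*c*(-η)*pp := mul_pos (mul_pos (by linarith) (by linarith)) hpp0
          linarith [hr, hXp, hApos]
        · apply mul_left_cancel₀ hdC; rw [hzmC]; linear_combination h'
      · intro h0
        exfalso; linarith
      · intro _
        rw [zMinus]
        have e2 : ((c ^ 2 * η ^ 2 *
            (l1 * l2 * (1 - c ^ 2) ^ 2 - (l2 - l1) ^ 2 * c ^ 2 * (1 - η ^ 2)) : ℝ) : ℂ)
            = ((Δ:ℝ):ℂ) := by rw [hΔ_def]
        rw [e2, csqrt_ofReal_nonneg hΔpos.le, ← hy_def, ← hM_def, ← hd_def]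
        rw [eq_div_iff hdC]
        have hr : zm*d = M - 2*y := by linarith [hdzm]
        have := congrArg (fun t : ℝ => (t:ℂ)) hr
        push_cast at this ⊢
        linear_combination this
    · -- η > 0 : solution is zp
      refine ⟨((zp:ℝ):ℂ), ?_, ?_, by simp, ?_, ?_⟩
      · rw [eqStar_iff, csqrt_prod_neg hzpl1 h12, ← hpp_def]
        have hsq : (2*c*η*pp)^2 = ((1+c^2)*zp - (l1+l2))^2 := by
          linear_combination 4*c^2*η^2*hpp2 - hQzp
        have hApos : 0 < 2*c*η*pp := mul_pos (mul_pos (by linarith) hpos) hpp0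
        have hreal : -(2*c*η*pp) = (l1+l2) - (1+c^2)*zp := by
          have hf : (2*c*η*pp - ((1+c^2)*zp - (l1+l2)))
              * (2*c*η*pp + ((1+c^2)*zp - (l1+l2))) = 0 := by linear_combination hsq
          rcases mul_eq_zero.mp hf with h' | h'
          · linarith [h']
          · linarith [h', hXp, hApos]
        have hC := congrArg (fun t : ℝ => (t:ℂ)) hreal
        push_cast at hC
        linear_combination hC
      · intro w hw
        rw [eqStar_iff] at hw
        have ha := csqrt_sq (w - (l1:ℂ))
        have hb := csqrt_sq (w - (l2:ℂ))
        have hsqw : (((l1:ℂ)+(l2:ℂ)) - (1+(c:ℂ)^2)*w)^2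
            = 4*(c:ℂ)^2*(η:ℂ)^2*((w-(l1:ℂ))*(w-(l2:ℂ))) := by
          linear_combination (-(2*(c:ℂ)*(η:ℂ)*(csqrt (w-(l1:ℂ))*csqrt (w-(l2:ℂ)))
              + (((l1:ℂ)+(l2:ℂ)) - (1+(c:ℂ)^2)*w)))*hw
            + 4*(c:ℂ)^2*(η:ℂ)^2*(csqrt (w-(l2:ℂ)))^2*ha
            + 4*(c:ℂ)^2*(η:ℂ)^2*(w-(l1:ℂ))*hb
        have hz : (((d:ℝ):ℂ)*w - ((M:ℝ):ℂ) - 2*((y:ℝ):ℂ))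
            * (((d:ℝ):ℂ)*w - ((M:ℝ):ℂ) + 2*((y:ℝ):ℂ)) = 0 := by
          rw [← hfac w]; linear_combination ((d:ℝ):ℂ)*hsqw
        have hzmC : ((d:ℝ):ℂ)*((zm:ℝ):ℂ) = ((M:ℝ):ℂ) - 2*((y:ℝ):ℂ) := by
          exact_mod_cast congrArg (fun t : ℝ => (t:ℂ)) hdzm
        have hzpC : ((d:ℝ):ℂ)*((zp:ℝ):ℂ) = ((M:ℝ):ℂ) + 2*((y:ℝ):ℂ) := by
          exact_mod_cast congrArg (fun t : ℝ => (t:ℂ)) hdzp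
        rcases mul_eq_zero.mp hz with h' | h'
        · apply mul_left_cancel₀ hdC; rw [hzpC]; linear_combination h'
        · -- w = zm : contradiction
          exfalso
          have hwzm : w = ((zm:ℝ):ℂ) := by
            apply mul_left_cancel₀ hdC; rw [hzmC]; linear_combination h'
          rw [hwzm, csqrt_prod_neg hzml1 h12, ← hpm_def] at hw
          have hr : -(2*c*η*pm) = (l1+l2) - (1+c^2)*zm := by
            have h2c : ((-(2*c*η*pm) : ℝ) : ℂ) = (((l1+l2) - (1+c^2)*zm : ℝ) : ℂ) := by
              push_cast; linear_combination hw
            exact_mod_cast h2c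
          have hApos : 0 < 2*c*η*pm := mul_pos (mul_pos (by linarith) hpos) hpm0
          linarith [hr, hXm, hApos]
      · intro _
        rw [zPlus]
        have e2 : ((c ^ 2 * η ^ 2 *
            (l1 * l2 * (1 - c ^ 2) ^ 2 - (l2 - l1) ^ 2 * c ^ 2 * (1 - η ^ 2)) : ℝ) : ℂ)
            = ((Δ:ℝ):ℂ) := by rw [hΔ_def]
        rw [e2, csqrt_ofReal_nonneg hΔpos.le, ← hy_def, ← hM_def, ← hd_def]
        rw [eq_div_iff hdC]
        have hr : zp*d = M + 2*y := by linarith [hdzp]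
        have := congrArg (fun t : ℝ => (t:ℂ)) hr
        push_cast at this ⊢
        linear_combination this
      · intro h0
        exfalso; linarith
end

section
/- Let λ < 0 be real, let c be real with 0 < c < 1 and s² = 1 − c². If z ∈ ℂ, ν ∈ [0, 1], and η ∈ [−1, 1] satisfy (z − λ) + z·ν + 2c·η·√z·√(z − λ)·√ν − s²·z = 0, then z lies in the set (−∞, λ/(1 + c⁴)] ∪ {w ∈ ℂ : |w − λ/(1 − c⁴)| ≤ c²·|λ|/(1 − c⁴)}, i.e. every such root z lies either on the real ray (−∞, λ/(1 + c⁴)] or in the closed disk centered at λ/(1 − c⁴) of radius c²·|λ|/(1 − c⁴). -/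
lemma disk_lemma (lam c : ℝ) (hlam : lam < 0) (hc : 0 < c) (hc1 : c < 1)
    (z u : ℂ) (hzu : z * (1 - u) = (lam : ℂ))
    (hns : Complex.normSq u ≤ c ^ 4) :
    ‖z - ((lam / (1 - c ^ 4) : ℝ) : ℂ)‖ ≤ c ^ 2 * |lam| / (1 - c ^ 4) := by
  have hc4' : c ^ 4 < 1 := by
    have := pow_lt_one₀ (le_of_lt hc) hc1 (n := 4) (by norm_num)
    linarith
  have hc4 : (0:ℝ) < 1 - c ^ 4 := by linarith
  have hu1 : (1:ℂ) - u ≠ 0 := by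
    intro h
    have : u = 1 := by linear_combination -h
    rw [this] at hns; simp [Complex.normSq] at hns; nlinarith
  have h2 : (1:ℂ) - (c:ℂ)^4 ≠ 0 := by
    have h2' : ((1 - c^4 : ℝ) : ℂ) ≠ 0 := by
      simp only [ne_eq, Complex.ofReal_eq_zero]; positivity
    simpa using h2'
  have hid2 : (z - ((lam / (1 - c ^ 4) : ℝ) : ℂ)) * ((1 - u) * ((1 - c^4 : ℝ):ℂ))
      = (lam:ℂ) * (u - (c:ℂ)^4) := by
    push_cast
    field_simp [h2]
    linear_combination ((1:ℂ) - (c:ℂ)^4) * hzu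
  have habs := congrArg (‖·‖) hid2
  rw [norm_mul, norm_mul, norm_mul] at habs
  have hkey : ‖u - (c:ℂ)^4‖ ≤ c^2 * ‖1 - u‖ := by
    have h1 : ‖u - (c:ℂ)^4‖ ^ 2 ≤ (c^2 * ‖1 - u‖) ^ 2 := by
      rw [mul_pow, Complex.sq_norm, Complex.sq_norm]
      simp only [Complex.normSq_apply, Complex.sub_re, Complex.sub_im, Complex.one_re,
        Complex.one_im]
      have hre : ((c:ℂ)^4).re = c^4 := by norm_cast
      have him : ((c:ℂ)^4).im = 0 := by norm_cast
      rw [hre, him]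
      have hns' : u.re^2 + u.im^2 ≤ c^4 := by
        simpa [Complex.normSq_apply, pow_two] using hns
      nlinarith [sq_nonneg u.im]
    have ha := norm_nonneg (u - (c:ℂ)^4)
    have hb : (0:ℝ) ≤ c^2 * ‖1 - u‖ := by positivity
    nlinarith [h1, ha, hb]
  have hca : ‖((lam:ℂ))‖ = |lam| := by rw [Complex.norm_real, Real.norm_eq_abs]
  have hcb : ‖(((1 - c^4 : ℝ)) : ℂ)‖ = 1 - c^4 := by
    rw [Complex.norm_real, Real.norm_eq_abs, abs_of_pos hc4]
  rw [hca, hcb] at habs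
  have habspos : (0:ℝ) < ‖1 - u‖ := by
    exact norm_pos_iff.mpr hu1
  rw [le_div_iff₀ hc4]
  nlinarith [abs_nonneg lam, norm_nonneg (z - ((lam / (1 - c ^ 4) : ℝ) : ℂ)),
      mul_le_mul_of_nonneg_left hkey (abs_nonneg lam), habs, habspos]

set_option maxHeartbeats 1000000 in
/-- for λ < 0 and 0 < c < 1, s² = 1 − c², every root z ∈ ℂ
of (z − λ) + zν + 2cη√z√(z−λ)√ν − s²z = 0 with ν ∈ [0,1], η ∈ [−1,1]
lies either on the real ray (−∞, λ/(1 + c⁴)] or in the closed disk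
centered at λ/(1 − c⁴) of radius c²|λ|/(1 − c⁴). -/
theorem z_root_in_ray_or_disk
    (lam c : ℝ) (hlam : lam < 0) (hc : 0 < c) (hc1 : c < 1)
    (z : ℂ) (ν η : ℝ) (hν : ν ∈ Set.Icc (0 : ℝ) 1) (hη : η ∈ Set.Icc (-1 : ℝ) 1)
    (heq : (z - (lam : ℂ)) + z * (ν : ℂ)
        + 2 * (c : ℂ) * (η : ℂ) * csqrt z * csqrt (z - (lam : ℂ)) * csqrt ((ν : ℝ) : ℂ)
        - (1 - (c : ℂ) ^ 2) * z = 0) :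
    (∃ x : ℝ, x ≤ lam / (1 + c ^ 4) ∧ z = (x : ℂ))
      ∨ ‖z - ((lam / (1 - c ^ 4) : ℝ) : ℂ)‖
          ≤ c ^ 2 * |lam| / (1 - c ^ 4) := by
  obtain ⟨hν0, hν1⟩ := hν
  obtain ⟨hη0, hη1⟩ := hη
  have hA : ((ν:ℂ) + (c:ℂ)^2) * z - (lam:ℂ)
      = -(2 * (c:ℂ) * (η:ℂ) * (csqrt z * csqrt (z - (lam:ℂ)) * csqrt ((ν:ℝ):ℂ))) := by
    linear_combination heq
  have hSq : (((ν:ℂ) + (c:ℂ)^2) * z - (lam:ℂ))^2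
      = 4 * (c:ℂ)^2 * (η:ℂ)^2 * (ν:ℂ) * (z * (z - (lam:ℂ))) := by
    rw [hA]
    have h1 := csqrt_sq z
    have h2 := csqrt_sq (z - (lam:ℂ))
    have h3 := csqrt_sq ((ν:ℝ):ℂ)
    linear_combination (4*(c:ℂ)^2*(η:ℂ)^2 * csqrt (z - (lam:ℂ))^2 * csqrt ((ν:ℝ):ℂ)^2) * h1
      + (4*(c:ℂ)^2*(η:ℂ)^2 * z * csqrt ((ν:ℝ):ℂ)^2) * h2
      + (4*(c:ℂ)^2*(η:ℂ)^2 * z * (z - (lam:ℂ))) * h3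
  have hlamC : (lam:ℂ) ≠ 0 := by
    simp only [ne_eq, Complex.ofReal_eq_zero]; exact hlam.ne
  have hz : z ≠ 0 := by
    intro h
    rw [h] at hSq
    simp only [zero_mul, mul_zero, zero_sub, neg_sq, zero_mul] at hSq
    exact hlamC (pow_eq_zero_iff (by norm_num)|>.mp hSq)
  obtain ⟨u, hzu⟩ : ∃ u : ℂ, z * (1 - u) = (lam:ℂ) :=
    ⟨1 - (lam:ℂ)/z, by field_simp; ring⟩
  have hq2 : (u + ((ν:ℂ)+(c:ℂ)^2-1))^2 * z^2
      = 4*(c:ℂ)^2*(η:ℂ)^2*(ν:ℂ) * u * z^2 := by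
    linear_combination hSq - ((((ν:ℂ)+(c:ℂ)^2)*z - (lam:ℂ)) + (((ν:ℂ)+(c:ℂ)^2)*z - z*(1-u))
      - 4*(c:ℂ)^2*(η:ℂ)^2*(ν:ℂ)*z) * hzu
  have hq : (u + ((ν:ℂ)+(c:ℂ)^2-1))^2 = 4*(c:ℂ)^2*(η:ℂ)^2*(ν:ℂ) * u :=
    mul_right_cancel₀ (pow_ne_zero 2 hz) hq2
  have hu1 : u ≠ 1 := by
    intro h
    rw [h] at hzu
    simp at hzu
    exact hlamC hzu.symm
  have hq' : (u + (((ν + c^2 - 1 : ℝ)):ℂ))^2 = (((4*c^2*η^2*ν : ℝ)):ℂ) * u := by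
    push_cast
    linear_combination hq
  rw [Complex.ext_iff] at hq'
  obtain ⟨hre, him⟩ := hq'
  simp only [pow_two, Complex.mul_re, Complex.mul_im, Complex.add_re, Complex.add_im,
    Complex.ofReal_re, Complex.ofReal_im] at hre him
  -- abbreviations
  have hre' : (u.re + (ν + c^2 - 1))^2 - u.im^2 = 4*c^2*η^2*ν * u.re := by
    linear_combination hre
  have him' : (2*(u.re + (ν + c^2 - 1))) * u.im = (4*c^2*η^2*ν) * u.im := by
    linear_combination him
  clear heq hA hSq hq2 hq hre him
  have hM0 : (0:ℝ) ≤ 4*c^2*η^2*ν := by positivity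
  by_cases hy : u.im = 0
  · -- u is real
    have hux : u = ((u.re : ℝ) : ℂ) := by
      apply Complex.ext <;> simp [hy]
    have hx1 : u.re ≠ 1 := by
      intro h; apply hu1; rw [hux, h]; norm_num
    have hq0 : (u.re + (ν + c^2 - 1))^2 = 4*c^2*η^2*ν * u.re := by
      rw [hy] at hre'; linarith [hre']
    -- x < 1
    have hxlt : u.re < 1 := by
      rcases lt_or_ge u.re 1 with h | h
      · exact h
      have hxgt : 1 < u.re := lt_of_le_of_ne h (Ne.symm hx1)
      exfalso
      have heta : η^2 ≤ 1 := by
        nlinarith [mul_nonneg (by linarith : (0:ℝ) ≤ 1 - η) (by linarith : (0:ℝ) ≤ 1 + η)]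
      have hq1 : (0:ℝ) ≤ (1 + (ν + c^2 - 1))^2 - 4*c^2*η^2*ν := by
        nlinarith [sq_nonneg (ν - c^2),
          mul_nonneg (mul_nonneg (by positivity : (0:ℝ) ≤ 4*c^2) hν0) (by linarith : (0:ℝ) ≤ 1 - η^2)]
      have hcc : c^2 < 1 := by nlinarith
      have hA2 : (ν + c^2 - 1)^2 < 1 := by
        nlinarith [mul_pos (by linarith : (0:ℝ) < 1 - (ν + c^2 - 1))
          (by nlinarith : (0:ℝ) < 1 + (ν + c^2 - 1))]
      nlinarith [hq0, hq1, hA2, hxgt, sq_nonneg (u.re - 1),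
        mul_nonneg (by linarith : (0:ℝ) ≤ u.re) hq1,
        mul_pos (sub_pos.mpr hxgt) (sub_pos.mpr hA2)]
    -- x ≥ -c²
    have hxge : -(c^2) ≤ u.re := by
      by_contra h
      push_neg at h
      have hP : (u.re + c^2) * ((4*c^2*η^2*ν) - 2*(ν + c^2 - 1) - u.re + c^2)
          = (ν + c^2 - 1 - c^2)^2 + c^2 * (4*c^2*η^2*ν) := by
        linear_combination -hq0
      nlinarith [hP, hM0, sq_nonneg (ν + c^2 - 1 - c^2),
        mul_nonneg (sq_nonneg c) hM0,
        mul_pos (by linarith : (0:ℝ) < -u.re - c^2)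
          (by linarith : (0:ℝ) < (4*c^2*η^2*ν) - 2*(ν + c^2 - 1) - u.re + c^2)]
    -- split at 0
    rcases le_or_gt 0 u.re with hx0 | hx0
    · -- ray
      left
      have h1x : (1:ℝ) - u.re ≠ 0 := by intro h; apply hx1; linarith
      have h1xpos : (0:ℝ) < 1 - u.re := by linarith
      refine ⟨lam / (1 - u.re), ?_, ?_⟩
      · have hc4 : (0:ℝ) < 1 + c^4 := by positivity
        rw [div_le_div_iff₀ h1xpos hc4]
        nlinarith [mul_nonneg (neg_nonneg.mpr hlam.le)
          (by positivity : (0:ℝ) ≤ c^4 + u.re)]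
      · have hcast : ((1 - u.re : ℝ) : ℂ) ≠ 0 := Complex.ofReal_ne_zero.mpr h1x
        have hzval : z = (lam:ℂ) / ((1 - u.re : ℝ) : ℂ) := by
          rw [eq_div_iff hcast]
          rw [hux] at hzu
          push_cast at hzu ⊢
          linear_combination hzu
        rw [Complex.ofReal_div]
        exact hzval
    · -- disk, real case
      right
      apply disk_lemma lam c hlam hc hc1 z u hzu
      have : Complex.normSq u = u.re^2 := by
        simp [Complex.normSq_apply, hy, pow_two]
      rw [this]
      nlinarith [mul_self_le_mul_self (by linarith : (0:ℝ) ≤ -u.re)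
        (by linarith : -u.re ≤ c^2)]
  · -- u not real : |u|² = A²
    have hsum : 2*(u.re + (ν + c^2 - 1)) = 4*c^2*η^2*ν := mul_right_cancel₀ hy him'
    have hy2eq : u.im^2 = (4*c^2*η^2*ν) * (ν + c^2 - 1) - (4*c^2*η^2*ν)^2/4 := by
      linear_combination (-1) * hre'
        + ((2*(u.re + (ν + c^2 - 1)) - 4*c^2*η^2*ν)/4) * hsum
    have hApos : 0 < ν + c^2 - 1 := by
      by_contra h
      push_neg at h
      have hy2 : 0 < u.im^2 := by positivity
      nlinarith [hy2eq, hy2, hM0, sq_nonneg (4*c^2*η^2*ν),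
        mul_nonneg hM0 (neg_nonneg.mpr h)]
    have hnormSq : Complex.normSq u = (ν + c^2 - 1)^2 := by
      rw [Complex.normSq_apply]
      linear_combination (-1) * hre' + u.re * hsum
    right
    apply disk_lemma lam c hlam hc hc1 z u hzu
    rw [hnormSq]
    nlinarith [hApos, hν1, sq_nonneg c]
end
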